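/- Let n ≥ 3 and let I = ⟨s,t,f⟩ and J = ⟨s',t',g⟩ be nontrivial linear identities of length 2n that are distinct, i.e., (s,t,f) ≠ (s',t',g) and (s,t,f) ≠ (t',s',g⁻¹). Then I implies J if and only if s = t, s' = s, t' = s, and g = f^k for some integer k ≥ 1. -/

import Mathlib

/-!
Test `J` in the magma that is free subject to `I`: the free magma on `ℕ` modulo the
congruence generated by the instances of `I`. An instance of `I` has at least `n` leaves, so a
term with exactly `n` leaves can only be rewritten at its root, where `I` sends the linear term
`s(x_σ(1), …, x_σ(n))` to `t(x_σ(f(1)), …, x_σ(f(n)))`. This root step is a partial bijection,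
so each class of such terms is a chain: of length one if `s ≠ t`, and the orbit of `σ` under
the powers of `f` if `s = t`. `J` holds in this magma exactly when its two sides lie in one
chain, which forces the stated shape; conversely `⟨s, s, f⟩` implies `⟨s, s, f^k⟩` by
iteration.
-/

/-- Bracketings: full binary trees in which every internal node has two children. -/
inductive Brack : Type
  | leaf : Brack
  | node : Brack → Brack → Brack

/-- Number of leaves of a bracketing. -/
def Brack.leaves : Brack → ℕ
  | .leaf => 1
  | .node l r => l.leaves + r.leaves

/-- The `s`-product in a magma `G`: evaluate the bracketing `s`, labelling its leaves
from left to right by `a k, a (k+1), …`. -/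
def Brack.eval {G : Type*} [Mul G] : Brack → (ℕ → G) → ℕ → G
  | .leaf, a, k => a k
  | .node l r, a, k => l.eval a k * r.eval a (k + l.leaves)

/-- Extend a permutation of `{0, …, n−1}` to `ℕ` (identity elsewhere). -/
def permNat {n : ℕ} (f : Equiv.Perm (Fin n)) (i : ℕ) : ℕ :=
  if h : i < n then (f ⟨i, h⟩ : ℕ) else i

/-- A magma `G` satisfies the linear identity `⟨s, t, f⟩` if for all `a₁, …, aₙ ∈ G`
the `s`-product of `(a₁, …, aₙ)` equals the `t`-product of `(a_{f(1)}, …, a_{f(n)})`. -/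
def Satisfies (G : Type*) [Mul G] {n : ℕ} (s t : Brack) (f : Equiv.Perm (Fin n)) : Prop :=
  ∀ a : ℕ → G, s.eval a 0 = t.eval (fun i => a (permNat f i)) 0

/-- A magma `G` is `m`AC-nice if any two products of the same `m` elements coincide:
for every `a`, all bracketings `s, t` with `m` leaves and all permutations `f, g`,
the `s`-product of `(a_{f(1)}, …, a_{f(m)})` equals the `t`-product of
`(a_{g(1)}, …, a_{g(m)})`. -/
def ACnice (G : Type*) [Mul G] (m : ℕ) : Prop :=
  ∀ (a : ℕ → G) (s t : Brack), s.leaves = m → t.leaves = m →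
    ∀ f g : Equiv.Perm (Fin m),
      s.eval (fun i => a (permNat f i)) 0 = t.eval (fun i => a (permNat g i)) 0

open Relation Equiv

theorem Relation.EqvGen.reflTransGen_or_reflTransGen {α : Type*} {r : α → α → Prop}
    (hr : Relator.RightUnique r) (hl : Relator.LeftUnique r) {a b : α} (h : EqvGen r a b) :
    ReflTransGen r a b ∨ ReflTransGen r b a := by
  induction h with
  | rel _ _ h => exact Or.inl (.single h)
  | refl => exact Or.inl .refl
  | symm _ _ _ ih => exact ih.symm
  | trans _ _ _ _ _ ih₁ ih₂ =>
    rcases ih₁ with h₁ | h₁ <;> rcases ih₂ with h₂ | h₂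
    · exact Or.inl (h₁.trans h₂)
    · -- two chains ending at the same point: follow them backwards
      have := ReflTransGen.total_of_right_unique (r := Function.swap r)
        (fun _ _ _ h h' => hl h h') (reflTransGen_swap.2 h₁) (reflTransGen_swap.2 h₂)
      exact this.symm.imp reflTransGen_swap.1 reflTransGen_swap.1
    · exact ReflTransGen.total_of_right_unique hr h₁ h₂
    · exact Or.inr (h₂.trans h₁)

theorem FreeMagma.eq_of_length_eq_one {α : Type*} {x : FreeMagma α} (h : x.length = 1) :
    x = .of x.toFreeSemigroup.head := by
  cases x with
  | of a => rfl
  | mul y z =>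
    have := y.length_pos
    have := z.length_pos
    simp only [FreeMagma.length] at h
    omega

section permNat

variable {n : ℕ}

theorem permNat_of_lt (f : Perm (Fin n)) {i : ℕ} (h : i < n) : permNat f i = f ⟨i, h⟩ :=
  dif_pos h

theorem permNat_lt (f : Perm (Fin n)) {i : ℕ} (h : i < n) : permNat f i < n := by
  rw [permNat_of_lt f h]
  exact Fin.is_lt _

theorem permNat_mul (f g : Perm (Fin n)) (i : ℕ) :
    permNat (f * g) i = permNat f (permNat g i) := by
  by_cases h : i < n <;> simp [permNat, h]

@[simp]
theorem permNat_one : permNat (1 : Perm (Fin n)) = id := by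
  ext i
  by_cases h : i < n <;> simp [permNat, h]

theorem permNat_permNat_inv (f : Perm (Fin n)) (i : ℕ) : permNat f (permNat f⁻¹ i) = i := by
  rw [← permNat_mul, mul_inv_cancel, permNat_one, id]

theorem Equiv.Perm.ext_permNat {f g : Perm (Fin n)} (h : ∀ i < n, permNat f i = permNat g i) :
    f = g := by
  ext ⟨i, hi⟩
  simpa [permNat_of_lt _ hi] using h i hi

theorem forall_lt_comp_permNat_iff {α : Type*} (f : Perm (Fin n)) {σ τ : ℕ → α} :
    (∀ i < n, σ (permNat f i) = τ (permNat f i)) ↔ ∀ i < n, σ i = τ i := by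
  refine ⟨fun h i hi => ?_, fun h i hi => h _ (permNat_lt f hi)⟩
  simpa only [permNat_permNat_inv] using h _ (permNat_lt f⁻¹ hi)

theorem sum_range_comp_permNat {M : Type*} [AddCommMonoid M] (f : Perm (Fin n)) (c : ℕ → M) :
    ∑ i ∈ Finset.range n, c (permNat f i) = ∑ i ∈ Finset.range n, c i := by
  simp only [← Fin.sum_univ_eq_sum_range, permNat_of_lt f (Fin.is_lt _)]
  exact Equiv.sum_comp f fun j => c j

end permNat

namespace Brack

variable {G H α : Type*} [Mul G] [Mul H]

theorem eval_congr (A : Brack) {a b : ℕ → G} {k : ℕ}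
    (h : ∀ i < A.leaves, a (k + i) = b (k + i)) : A.eval a k = A.eval b k := by
  induction A generalizing k with
  | leaf => exact h 0 Nat.one_pos
  | node l r ihl ihr =>
    simp only [eval]
    rw [ihl fun i hi => h i (by simp only [leaves]; omega),
      ihr fun i hi => by
        simpa only [Nat.add_assoc] using h (l.leaves + i) (by simp only [leaves]; omega)]

theorem map_eval (φ : G →ₙ* H) (A : Brack) (a : ℕ → G) (k : ℕ) :
    φ (A.eval a k) = A.eval (fun i => φ (a i)) k := by
  induction A generalizing k with
  | leaf => rfl
  | node l r ihl ihr => simp only [eval, map_mul, ihl, ihr]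

theorem length_eval (A : Brack) (θ : ℕ → FreeMagma α) (k : ℕ) :
    (A.eval θ k).length = ∑ i ∈ Finset.range A.leaves, (θ (k + i)).length := by
  induction A generalizing k with
  | leaf => simp [eval, leaves]
  | node l r ihl ihr =>
    simp only [eval, leaves, FreeMagma.length, ihl, ihr, Finset.sum_range_add, Nat.add_assoc]

theorem leaves_le_length_eval (A : Brack) (θ : ℕ → FreeMagma α) (k : ℕ) :
    A.leaves ≤ (A.eval θ k).length := by
  rw [length_eval]
  calc A.leaves = ∑ _i ∈ Finset.range A.leaves, 1 := by simp
    _ ≤ _ := Finset.sum_le_sum fun i _ => (θ (k + i)).length_pos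

theorem exists_eq_of_length_eval_le (A : Brack) {θ : ℕ → FreeMagma α}
    (h : (A.eval θ 0).length ≤ A.leaves) :
    ∃ σ : ℕ → α, ∀ i < A.leaves, θ i = .of (σ i) := by
  have hone : ∀ i < A.leaves, (θ i).length = 1 := by
    have hsum : ∑ i ∈ Finset.range A.leaves, 1 =
        ∑ i ∈ Finset.range A.leaves, (θ i).length := by
      simpa [length_eval] using (h.antisymm (A.leaves_le_length_eval θ 0)).symm
    intro i hi
    exact ((Finset.sum_eq_sum_iff_of_le fun i _ => (θ i).length_pos).1 hsum i
      (Finset.mem_range.2 hi)).symm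
  exact ⟨fun i => (θ i).toFreeSemigroup.head,
    fun i hi => FreeMagma.eq_of_length_eq_one (hone i hi)⟩

theorem eval_of_inj {A B : Brack} {σ τ : ℕ → α} {k m : ℕ}
    (h : A.eval (fun i => FreeMagma.of (σ i)) k = B.eval (fun i => FreeMagma.of (τ i)) m) :
    A = B ∧ ∀ i < A.leaves, σ (k + i) = τ (m + i) := by
  induction A generalizing B k m with
  | leaf =>
    cases B with
    | leaf =>
      refine ⟨rfl, fun i hi => ?_⟩
      obtain rfl : i = 0 := Nat.lt_one_iff.1 hi
      injection h
    | node => cases h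
  | node l r ihl ihr =>
    cases B with
    | leaf => cases h
    | node l' r' =>
      injection h with hl hr
      obtain ⟨rfl, hσl⟩ := ihl hl
      obtain ⟨rfl, hσr⟩ := ihr hr
      refine ⟨rfl, fun i hi => ?_⟩
      rcases Nat.lt_or_ge i l.leaves with hil | hil
      · exact hσl i hil
      · obtain ⟨j, rfl⟩ := Nat.exists_eq_add_of_le hil
        simpa only [Nat.add_assoc] using hσr j (by simp only [leaves] at hi; omega)

def linear (A : Brack) (σ : ℕ → ℕ) : FreeMagma ℕ := A.eval (fun i => .of (σ i)) 0

theorem linear_inj {A B : Brack} {σ τ : ℕ → ℕ} :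
    A.linear σ = B.linear τ ↔ A = B ∧ ∀ i < A.leaves, σ i = τ i := by
  refine ⟨fun h => by simpa only [Nat.zero_add] using eval_of_inj h, ?_⟩
  rintro ⟨rfl, h⟩
  exact A.eval_congr fun i hi => by simp only [Nat.zero_add, h i hi]

theorem linear_congr (A : Brack) {σ τ : ℕ → ℕ} (h : ∀ i < A.leaves, σ i = τ i) :
    A.linear σ = A.linear τ :=
  linear_inj.2 ⟨rfl, h⟩

theorem length_linear (A : Brack) (σ : ℕ → ℕ) : (A.linear σ).length = A.leaves := by
  simp [linear, length_eval, FreeMagma.length]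

theorem linear_permNat_inj {n : ℕ} {A B : Brack} (hA : A.leaves = n) {φ ψ : Perm (Fin n)} :
    A.linear (permNat φ) = B.linear (permNat ψ) ↔ A = B ∧ φ = ψ := by
  refine ⟨fun h => ?_, by rintro ⟨rfl, rfl⟩; rfl⟩
  obtain ⟨rfl, hφψ⟩ := linear_inj.1 h
  exact ⟨rfl, Perm.ext_permNat fun i hi => hφψ i (hi.trans_eq hA.symm)⟩

end Brack

namespace Satisfies

variable {G H : Type*} [Mul G] [Mul H] {n : ℕ} {s t : Brack} {f : Perm (Fin n)}

theorem of_injective (φ : G →ₙ* H) (hφ : Function.Injective φ) (h : Satisfies H s t f) :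
    Satisfies G s t f := fun a =>
  hφ <| by simpa only [Brack.map_eval] using h fun i => φ (a i)

theorem _root_.MulEquiv.satisfies_congr (e : G ≃* H) : Satisfies G s t f ↔ Satisfies H s t f :=
  ⟨of_injective e.symm.toMulHom e.symm.injective, of_injective e.toMulHom e.injective⟩

theorem pow (h : Satisfies G s s f) : ∀ k : ℕ, Satisfies G s s (f ^ k)
  | 0 => fun a => by simp
  | k + 1 => fun a => by
    rw [pow h k a, h]
    simp only [pow_succ, permNat_mul]

end Satisfies

section RelFreeMagma

variable {n : ℕ} (s t : Brack) (f : Perm (Fin n))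

def IdentityRel (u v : FreeMagma ℕ) : Prop :=
  ∃ θ : ℕ → FreeMagma ℕ, u = s.eval θ 0 ∧ v = t.eval (θ ∘ permNat f) 0

abbrev RelFreeMagma : Type := (conGen (IdentityRel s t f)).Quotient

theorem satisfies_relFreeMagma : Satisfies (RelFreeMagma s t f) s t f := by
  intro a
  obtain ⟨θ, rfl⟩ := Quotient.mk''_surjective.comp_left a
  have h :
      (conGen _).mkMulHom (s.eval θ 0) = (conGen _).mkMulHom (t.eval (θ ∘ permNat f) 0) :=
    (Con.eq _).2 (ConGen.Rel.of (r := IdentityRel s t f) _ _ ⟨θ, rfl, rfl⟩)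
  rw [Brack.map_eval, Brack.map_eval] at h
  exact h

def RootStep (u v : FreeMagma ℕ) : Prop :=
  ∃ σ : ℕ → ℕ, u = s.linear σ ∧ v = t.linear (σ ∘ permNat f)

def RootRel (u v : FreeMagma ℕ) : Prop :=
  u = v ∨ (u.length = n ∧ v.length = n ∧ EqvGen (RootStep s t f) u v) ∨
    (n < u.length ∧ n < v.length)

variable {s t f}

theorem rootStep_rightUnique (hs : s.leaves = n) (ht : t.leaves = n) :
    Relator.RightUnique (RootStep s t f) := by
  rintro _ _ _ ⟨σ, rfl, rfl⟩ ⟨τ, h, rfl⟩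
  exact t.linear_congr fun i hi =>
    (Brack.linear_inj.1 h).2 _ ((permNat_lt f (ht ▸ hi)).trans_eq hs.symm)

theorem rootStep_leftUnique (hs : s.leaves = n) (ht : t.leaves = n) :
    Relator.LeftUnique (RootStep s t f) := by
  rintro _ _ _ ⟨σ, rfl, rfl⟩ ⟨τ, rfl, h⟩
  have : ∀ i < n, σ (permNat f i) = τ (permNat f i) := ht ▸ (Brack.linear_inj.1 h).2
  exact s.linear_congr (hs ▸ (forall_lt_comp_permNat_iff f).1 this)

theorem RootRel.eq_or_le_length {u v : FreeMagma ℕ} (h : RootRel s t f u v) :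
    u = v ∨ n ≤ u.length ∧ n ≤ v.length := by
  rcases h with h | ⟨hu, hv, -⟩ | ⟨hu, hv⟩
  exacts [Or.inl h, Or.inr ⟨hu.ge, hv.ge⟩, Or.inr ⟨hu.le, hv.le⟩]

variable (s t f) in
def rootCon : Con (FreeMagma ℕ) where
  r := RootRel s t f
  iseqv := by
    refine ⟨fun _ => Or.inl rfl, ?_, ?_⟩
    · rintro _ _ (rfl | ⟨hu, hv, h⟩ | ⟨hu, hv⟩)
      exacts [Or.inl rfl, Or.inr (Or.inl ⟨hv, hu, h.symm⟩), Or.inr (Or.inr ⟨hv, hu⟩)]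
    · rintro _ _ _ (rfl | ⟨hu, hv, h⟩ | ⟨hu, hv⟩) h'
      · exact h'
      · rcases h' with rfl | ⟨-, hw, h'⟩ | ⟨hv', -⟩
        exacts [Or.inr (Or.inl ⟨hu, hv, h⟩), Or.inr (Or.inl ⟨hu, hw, h.trans _ _ _ h'⟩),
          absurd hv hv'.ne']
      · rcases h' with rfl | ⟨hv', -⟩ | ⟨-, hw⟩
        exacts [Or.inr (Or.inr ⟨hu, hv⟩), absurd hv' hv.ne', Or.inr (Or.inr ⟨hu, hw⟩)]
  mul' := by
    rintro x x' y y' hx hy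
    rcases hx.eq_or_le_length with rfl | ⟨hx, hx'⟩
    · rcases hy.eq_or_le_length with rfl | ⟨hy, hy'⟩
      · exact Or.inl rfl
      · refine Or.inr (Or.inr ⟨?_, ?_⟩) <;> simp only [FreeMagma.length] <;>
          linarith [x.length_pos]
    · refine Or.inr (Or.inr ⟨?_, ?_⟩) <;> simp only [FreeMagma.length] <;>
        linarith [y.length_pos, y'.length_pos]

theorem identityRel_le_rootCon (hs : s.leaves = n) (ht : t.leaves = n) :
    IdentityRel s t f ≤ rootCon s t f := by
  rintro _ _ ⟨θ, rfl, rfl⟩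
  have hlen : (t.eval (θ ∘ permNat f) 0).length = (s.eval θ 0).length := by
    simp only [Brack.length_eval, hs, ht, zero_add, Function.comp_apply]
    exact sum_range_comp_permNat f fun i => (θ i).length
  rcases (hs ▸ s.leaves_le_length_eval θ 0).eq_or_lt with heq | hlt
  · obtain ⟨σ, hσ⟩ := s.exists_eq_of_length_eval_le (hs ▸ heq.ge)
    refine Or.inr (Or.inl ⟨heq.symm, hlen.trans heq.symm, .rel _ _ ⟨σ, ?_, ?_⟩⟩)
    · exact s.eval_congr fun i hi => by rw [zero_add, hσ i hi]
    · refine t.eval_congr fun i hi => ?_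
      rw [zero_add]
      exact hσ _ ((permNat_lt f (ht ▸ hi)).trans_eq hs.symm)
  · exact Or.inr (Or.inr ⟨hlt, hlen ▸ hlt⟩)

theorem eqvGen_rootStep_of_conGen (hs : s.leaves = n) (ht : t.leaves = n) {u v : FreeMagma ℕ}
    (h : conGen (IdentityRel s t f) u v) (hu : u.length = n) : EqvGen (RootStep s t f) u v := by
  rcases Con.conGen_le.2 (identityRel_le_rootCon hs ht) h with rfl | ⟨-, -, h⟩ | ⟨hu', -⟩
  exacts [.refl _, h, absurd hu hu'.ne']

theorem eqvGen_of_satisfies_relFreeMagma (hs : s.leaves = n) (ht : t.leaves = n)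
    {s' t' : Brack} (hs' : s'.leaves = n) {g : Perm (Fin n)}
    (h : Satisfies (RelFreeMagma s t f) s' t' g) :
    EqvGen (RootStep s t f) (s'.linear (permNat (1 : Perm (Fin n)))) (t'.linear (permNat g)) := by
  have h := h fun i => (conGen _).mkMulHom (.of i)
  rw [← Brack.map_eval, ← Brack.map_eval (conGen _).mkMulHom t', Con.mkMulHom_apply,
    Con.mkMulHom_apply, Con.eq] at h
  rw [permNat_one]
  exact eqvGen_rootStep_of_conGen hs ht h ((s'.length_linear id).trans hs')

end RelFreeMagma

section Chains

variable {n : ℕ} {s t : Brack} {f : Perm (Fin n)}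

theorem RootStep.eq_or_of_reflTransGen_of_ne (hst : s ≠ t) {u v : FreeMagma ℕ}
    (h : ReflTransGen (RootStep s t f) u v) : u = v ∨ RootStep s t f u v := by
  induction h with
  | refl => exact Or.inl rfl
  | tail _ hvw ih =>
    rcases ih with rfl | ⟨σ, -, rfl⟩
    · exact Or.inr hvw
    · obtain ⟨τ, h, -⟩ := hvw
      exact absurd (Brack.linear_inj.1 h).1.symm hst

theorem RootStep.eq_or_of_reflTransGen_self (hs : s.leaves = n) {u v : FreeMagma ℕ}
    (h : ReflTransGen (RootStep s s f) u v) :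
    u = v ∨ ∃ σ k, u = s.linear σ ∧ v = s.linear (σ ∘ permNat (f ^ (k + 1))) := by
  induction h with
  | refl => exact Or.inl rfl
  | tail _ hvw ih =>
    obtain ⟨τ, hv, rfl⟩ := hvw
    rcases ih with rfl | ⟨σ, k, rfl, hσ⟩
    · exact Or.inr ⟨τ, 0, hv, by rw [zero_add, pow_one]⟩
    · refine Or.inr ⟨σ, k + 1, rfl, s.linear_congr fun i hi => ?_⟩
      have := (Brack.linear_inj.1 (hσ.symm.trans hv)).2 _
        ((permNat_lt f (hs ▸ hi)).trans_eq hs.symm)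
      rw [Function.comp_apply, ← this, pow_succ _ (k + 1)]
      simp only [Function.comp_apply, permNat_mul]

theorem eq_mul_of_linear_permNat_eq {A B : Brack} (hA : A.leaves = n) (hB : B.leaves = n)
    {φ ψ χ : Perm (Fin n)} {σ : ℕ → ℕ} (hu : A.linear (permNat φ) = s.linear σ)
    (hv : B.linear (permNat ψ) = t.linear (σ ∘ permNat χ)) : A = s ∧ B = t ∧ ψ = φ * χ := by
  obtain ⟨rfl, hφ⟩ := Brack.linear_inj.1 hu
  obtain ⟨rfl, hψ⟩ := Brack.linear_inj.1 hv
  refine ⟨rfl, rfl, Perm.ext_permNat fun i hi => ?_⟩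
  rw [hA] at hφ
  rw [hB] at hψ
  rw [hψ i hi, permNat_mul, Function.comp_apply, hφ _ (permNat_lt χ hi)]

theorem RootStep.eq_or_of_eqvGen_of_ne (hs : s.leaves = n) (ht : t.leaves = n) (hst : s ≠ t)
    {A B : Brack} (hA : A.leaves = n) (hB : B.leaves = n) {φ ψ : Perm (Fin n)}
    (hne : ¬(A = B ∧ φ = ψ))
    (h : EqvGen (RootStep s t f) (A.linear (permNat φ)) (B.linear (permNat ψ))) :
    (A = s ∧ B = t ∧ ψ = φ * f) ∨ (B = s ∧ A = t ∧ φ = ψ * f) := by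
  have hne' := mt (Brack.linear_permNat_inj hA).1 hne
  rcases h.reflTransGen_or_reflTransGen (rootStep_rightUnique hs ht)
      (rootStep_leftUnique hs ht) with h | h
  · rcases RootStep.eq_or_of_reflTransGen_of_ne hst h with h | ⟨σ, hu, hv⟩
    exacts [absurd h hne', Or.inl (eq_mul_of_linear_permNat_eq hA hB hu hv)]
  · rcases RootStep.eq_or_of_reflTransGen_of_ne hst h with h | ⟨σ, hu, hv⟩
    exacts [absurd h.symm hne', Or.inr (eq_mul_of_linear_permNat_eq hB hA hu hv)]

theorem RootStep.exists_pow_of_eqvGen_self (hs : s.leaves = n)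
    {A B : Brack} (hA : A.leaves = n) (hB : B.leaves = n) {φ ψ : Perm (Fin n)}
    (hne : ¬(A = B ∧ φ = ψ))
    (h : EqvGen (RootStep s s f) (A.linear (permNat φ)) (B.linear (permNat ψ))) :
    A = s ∧ B = s ∧ ∃ k, 1 ≤ k ∧ ψ = φ * f ^ k := by
  have hne' := mt (Brack.linear_permNat_inj hA).1 hne
  rcases h.reflTransGen_or_reflTransGen (rootStep_rightUnique hs hs)
      (rootStep_leftUnique hs hs) with h | h
  · rcases RootStep.eq_or_of_reflTransGen_self hs h with h | ⟨σ, k, hu, hv⟩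
    · exact absurd h hne'
    · obtain ⟨rfl, rfl, hψ⟩ := eq_mul_of_linear_permNat_eq hA hB hu hv
      exact ⟨rfl, rfl, k + 1, k.succ_pos, hψ⟩
  · rcases RootStep.eq_or_of_reflTransGen_self hs h with h | ⟨σ, k, hu, hv⟩
    · exact absurd h.symm hne'
    · obtain ⟨rfl, rfl, hφ⟩ := eq_mul_of_linear_permNat_eq hB hA hu hv
      -- in a finite group, inverses are positive powers
      obtain ⟨m, hm : f ^ m = _⟩ : (f ^ (k + 1))⁻¹ ∈ Submonoid.powers f :=
        mem_powers_iff_mem_zpowers.2 (inv_mem (Subgroup.npow_mem_zpowers f _))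
      refine ⟨rfl, rfl, m, Nat.one_le_iff_ne_zero.2 fun hm0 => hne ⟨rfl, ?_⟩, ?_⟩
      · rw [hφ, ← inv_inv (f ^ (k + 1)), ← hm, hm0, pow_zero, inv_one, mul_one]
      · rw [hm, hφ, mul_inv_cancel_right]

end Chains

theorem stmt4.{w} (n : ℕ) (hn : 3 ≤ n)
    (s t : Brack) (hs : s.leaves = n) (ht : t.leaves = n) (f : Equiv.Perm (Fin n))
    (s' t' : Brack) (hs' : s'.leaves = n) (ht' : t'.leaves = n) (g : Equiv.Perm (Fin n))
    (hI : ¬(s = t ∧ f = 1)) (hJ : ¬(s' = t' ∧ g = 1))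
    (hd1 : (s, t, f) ≠ (s', t', g)) (hd2 : (s, t, f) ≠ (t', s', g⁻¹)) :
    (∀ (G : Type w) [Mul G], Satisfies G s t f → Satisfies G s' t' g) ↔
      (s = t ∧ s' = s ∧ t' = s ∧ ∃ k : ℕ, 1 ≤ k ∧ g = f ^ k) := by
  refine ⟨fun H => ?_, ?_⟩
  · have e : ULift.{w} (RelFreeMagma s t f) ≃* RelFreeMagma s t f := MulEquiv.ulift
    have hchain := eqvGen_of_satisfies_relFreeMagma hs ht hs' <|
      e.satisfies_congr.1 <| H _ <| e.satisfies_congr.2 (satisfies_relFreeMagma s t f)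
    have hne : ¬(s' = t' ∧ 1 = g) := fun h => hJ ⟨h.1, h.2.symm⟩
    by_cases hst : s = t
    · subst hst
      obtain ⟨rfl, rfl, k, hk, rfl⟩ := RootStep.exists_pow_of_eqvGen_self hs hs' ht' hne hchain
      exact ⟨rfl, rfl, rfl, k, hk, one_mul _⟩
    · rcases RootStep.eq_or_of_eqvGen_of_ne hs ht hst hs' ht' hne hchain with
        ⟨rfl, rfl, rfl⟩ | ⟨rfl, rfl, hg⟩
      · exact absurd (by rw [one_mul]) hd1
      · exact absurd (by rw [eq_inv_of_mul_eq_one_right hg.symm]) hd2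
  · rintro ⟨rfl, rfl, rfl, k, -, rfl⟩ G _ hI
    exact hI.pow k
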